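/- arXiv:1705.05198 — 3 statements merged into one kernel-verified Lean document; each statement's English description precedes it below -/
import Mathlib

section
/- Let X be a binomial random variable with parameters m and q (m trials, success probability q ∈ (0,1)), and let s be an integer with 0 ≤ s < mq. Then P(X ≤ s) ≤ ((m - s) q / (mq - s)) · C(m, s) q^s (1-q)^{m-s}. In particular, if mq → ∞ and s is fixed, then P(X ≤ s) ~ C(m, s) q^s (1-q)^{m-s}. -/
/-!
The binomial terms `b k = C(m,k) q^k (1-q)^(m-k)` satisfy
`b k * (m - k) q = b (k+1) * (k+1)(1 - q)`, so for `k < s` the ratio `b k / b (k+1)` is at most `r = s (1 - q) / ((m - s) q)`, which is `< 1` exactly when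
`s < m q`. Comparing the tail with a geometric series of ratio `r` ending at `b s` gives
`P(X ≤ s) ≤ b s / (1 - r) = (m - s) q / (m q - s) · b s`, and this factor tends to `1` as `m q → ∞`.
-/

open Finset Filter Topology

theorem Finset.sum_range_succ_le_div_one_sub {α : Type*} [Field α] [LinearOrder α]
    [IsStrictOrderedRing α] {f : ℕ → α} {r : α} (hr₀ : 0 ≤ r) (hr₁ : r < 1) (hf₀ : 0 ≤ f 0) :
    ∀ s : ℕ, (∀ k < s, f k ≤ r * f (k + 1)) → ∑ k ∈ range (s + 1), f k ≤ f s / (1 - r) := by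
  have hr : 0 < 1 - r := sub_pos.mpr hr₁
  intro s
  induction s with
  | zero =>
    intro _
    rw [sum_range_one, le_div_iff₀ hr]
    nlinarith
  | succ s ih =>
    intro hf
    have hlast : f s ≤ r * f (s + 1) := hf s s.lt_succ_self
    calc ∑ k ∈ range (s + 1 + 1), f k
        = ∑ k ∈ range (s + 1), f k + f (s + 1) := sum_range_succ _ _
      _ ≤ r * f (s + 1) / (1 - r) + f (s + 1) := by
          gcongr
          exact (ih fun k hk => hf k (hk.trans s.lt_succ_self)).trans
            (div_le_div_of_nonneg_right hlast hr.le)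
      _ = f (s + 1) / (1 - r) := by field_simp; ring

noncomputable def binomTerm (m : ℕ) (q : ℝ) (k : ℕ) : ℝ :=
  m.choose k * q ^ k * (1 - q) ^ (m - k)

section binomTerm

variable {m : ℕ} {q : ℝ}

theorem binomTerm_nonneg (hq₀ : 0 ≤ q) (hq₁ : q ≤ 1) (k : ℕ) : 0 ≤ binomTerm m q k := by
  unfold binomTerm
  have : 0 ≤ 1 - q := sub_nonneg.mpr hq₁
  positivity

theorem binomTerm_pos (hq₀ : 0 < q) (hq₁ : q < 1) {k : ℕ} (hk : k ≤ m) :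
    0 < binomTerm m q k := by
  unfold binomTerm
  have : (0 : ℝ) < m.choose k := by exact_mod_cast Nat.choose_pos hk
  have : 0 < 1 - q := sub_pos.mpr hq₁
  positivity

theorem binomTerm_mul_eq_binomTerm_succ_mul {k : ℕ} (hk : k < m) :
    binomTerm m q k * ((m - k) * q) = binomTerm m q (k + 1) * ((k + 1) * (1 - q)) := by
  have hchoose : (m.choose (k + 1) : ℝ) * (k + 1) = m.choose k * (m - k) := by
    have h := congrArg (Nat.cast : ℕ → ℝ) (Nat.choose_succ_right_eq m k)
    push_cast [Nat.cast_sub hk.le] at h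
    exact h
  have hpow : (1 - q) ^ (m - k) = (1 - q) ^ (m - (k + 1)) * (1 - q) := by
    rw [← pow_succ]; congr 1; omega
  unfold binomTerm
  rw [hpow, pow_succ]
  linear_combination (-(q ^ k * q * (1 - q) ^ (m - (k + 1)) * (1 - q))) * hchoose

theorem binomTerm_le_mul_binomTerm_succ (hq₀ : 0 < q) (hq₁ : q ≤ 1) {s k : ℕ} (hsm : s < m)
    (hk : k < s) :
    binomTerm m q k ≤ s * (1 - q) / ((m - s) * q) * binomTerm m q (k + 1) := by
  have hms : (0 : ℝ) < (m - s) * q := mul_pos (sub_pos.mpr (by exact_mod_cast hsm)) hq₀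
  have hks : (k : ℝ) + 1 ≤ s := by exact_mod_cast hk
  have hb := binomTerm_nonneg hq₀.le hq₁ (m := m) k
  have hb' := binomTerm_nonneg hq₀.le hq₁ (m := m) (k + 1)
  have hstep := binomTerm_mul_eq_binomTerm_succ_mul (q := q) (hk.trans hsm)
  rw [div_mul_eq_mul_div, le_div_iff₀ hms]
  nlinarith [mul_nonneg hb' (sub_nonneg.mpr hq₁), mul_nonneg hb hq₀.le]

theorem sum_binomTerm_le (hq₀ : 0 < q) (hq₁ : q < 1) {s : ℕ} (hs : (s : ℝ) < m * q) :
    ∑ k ∈ range (s + 1), binomTerm m q k ≤ (m - s) * q / (m * q - s) * binomTerm m q s := by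
  have hsm : (s : ℝ) < m := hs.trans_le (mul_le_of_le_one_right m.cast_nonneg hq₁.le)
  have hms : (0 : ℝ) < (m - s) * q := mul_pos (sub_pos.mpr hsm) hq₀
  have hr₁ : s * (1 - q) / ((m - s) * q) < 1 := by
    rw [div_lt_one hms]; linarith
  have hr₀ : 0 ≤ s * (1 - q) / ((m - s) * q) := by
    have : 0 ≤ 1 - q := sub_nonneg.mpr hq₁.le
    positivity
  have hgeom := sum_range_succ_le_div_one_sub hr₀ hr₁ (binomTerm_nonneg hq₀.le hq₁.le 0) s
    fun k hk => binomTerm_le_mul_binomTerm_succ hq₀ hq₁.le (by exact_mod_cast hsm) hk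
  have hfactor : 1 - s * (1 - q) / ((m - s) * q) = (m * q - s) / ((m - s) * q) := by
    rw [one_sub_div hms.ne']
    ring
  rw [hfactor] at hgeom
  exact hgeom.trans_eq (by field_simp)

end binomTerm

theorem tendsto_div_sub_const_atTop (c : ℝ) : Tendsto (fun x : ℝ => x / (x - c)) atTop (𝓝 1) := by
  have hsmall : Tendsto (fun x : ℝ => c / (x - c)) atTop (𝓝 0) :=
    tendsto_const_nhds.div_atTop (tendsto_atTop_add_const_right _ (-c) tendsto_id)
  have heq : ∀ᶠ x : ℝ in atTop, 1 + c / (x - c) = x / (x - c) := by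
    filter_upwards [eventually_gt_atTop c] with x hx
    field_simp [(sub_pos.mpr hx).ne']
    ring
  simpa using (tendsto_const_nhds.add hsmall).congr' heq

theorem tendsto_sum_binomTerm_div (s : ℕ) {m : ℕ → ℕ} {q : ℕ → ℝ} (hq₀ : ∀ n, 0 < q n)
    (hq₁ : ∀ n, q n < 1) (hmq : Tendsto (fun n => (m n : ℝ) * q n) atTop atTop) :
    Tendsto (fun n => (∑ k ∈ range (s + 1), binomTerm (m n) (q n) k) / binomTerm (m n) (q n) s)
      atTop (𝓝 1) := by
  refine tendsto_of_tendsto_of_tendsto_of_le_of_le' tendsto_const_nhds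
    ((tendsto_div_sub_const_atTop s).comp hmq) ?_ ?_ <;>
  filter_upwards [hmq.eventually_gt_atTop (s : ℝ)] with n hs
  all_goals
    have hsm : s ≤ m n := by
      have := hs.trans_le (mul_le_of_le_one_right (m n).cast_nonneg (hq₁ n).le)
      exact_mod_cast this.le
    have hb := binomTerm_pos (hq₀ n) (hq₁ n) hsm
  · rw [le_div_iff₀ hb, one_mul]
    exact single_le_sum (fun k _ => binomTerm_nonneg (hq₀ n).le (hq₁ n).le k)
      (self_mem_range_succ s)
  · rw [div_le_iff₀ hb]
    refine (sum_binomTerm_le (hq₀ n) (hq₁ n) hs).trans (mul_le_mul_of_nonneg_right ?_ hb.le)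
    refine div_le_div_of_nonneg_right ?_ (sub_pos.mpr hs).le
    nlinarith [mul_nonneg (Nat.cast_nonneg s : (0 : ℝ) ≤ s) (hq₀ n).le]

/-- Left tail of a binomial by its last term: for 0 ≤ s < mq,
P(X ≤ s) ≤ ((m-s)q/(mq-s)) C(m,s) q^s (1-q)^(m-s); and if s is fixed and
m_n q_n → ∞, then P(X ≤ s) ~ C(m,s) q^s (1-q)^(m-s). -/
theorem stmt_6 :
    (∀ (m : ℕ) (q : ℝ), 0 < q → q < 1 → ∀ s : ℕ, (s : ℝ) < m * q →
      ∑ k ∈ Finset.range (s + 1), (m.choose k : ℝ) * q ^ k * (1 - q) ^ (m - k) ≤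
        (((m : ℝ) - s) * q / (m * q - s)) *
          (m.choose s : ℝ) * q ^ s * (1 - q) ^ (m - s)) ∧
    (∀ (s : ℕ) (m : ℕ → ℕ) (q : ℕ → ℝ), (∀ n, 0 < q n) → (∀ n, q n < 1) →
      Filter.Tendsto (fun n => (m n : ℝ) * q n) Filter.atTop Filter.atTop →
      Filter.Tendsto
        (fun n =>
          (∑ k ∈ Finset.range (s + 1),
            ((m n).choose k : ℝ) * q n ^ k * (1 - q n) ^ (m n - k)) /
          (((m n).choose s : ℝ) * q n ^ s * (1 - q n) ^ (m n - s)))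
        Filter.atTop (nhds 1)) := by
  refine ⟨fun m q hq₀ hq₁ s hs => ?_, fun s m q hq₀ hq₁ hmq => tendsto_sum_binomTerm_div s hq₀ hq₁ hmq⟩
  simpa only [binomTerm, mul_assoc] using sum_binomTerm_le hq₀ hq₁ hs
end

section
/- Let p ∈ (0,1), j ≤ ℓ positive integers, g ≥ 1, and for integers r, s ∈ {0, ..., g-1} and D with 0 ≤ D ≤ 2r, define B(r,s,D) = C(⌊j/2⌋, r) p^{2r} (1-p²)^{⌊j/2⌋-r} · C(⌊ℓ/2⌋ - D, s) p^{2s} (1-p²)^{⌊ℓ/2⌋-D-s} (1-p)^D. Then ∑_{r,s=0}^{g-1} B(r,s,D) ≤ (∑_{r=0}^{g-1} C(⌊j/2⌋, r) p^{2r} (1-p²)^{⌊j/2⌋-r}) · (∑_{s=0}^{g-1} C(⌊ℓ/2⌋, s) p^{2s} (1-p²)^{⌊ℓ/2⌋-s}). -/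
theorem choose_tsub_mul_pow_mul_pow_le {R : Type*} [CommSemiring R] [PartialOrder R]
    [IsOrderedRing R] {x y z : R} (hx : 0 ≤ x) (hz : 0 ≤ z) (hzy : z ≤ y) {m D : ℕ}
    (hD : D ≤ m) (s : ℕ) :
    ((m - D).choose s : R) * x ^ s * y ^ (m - D - s) * z ^ D ≤
      (m.choose s : R) * x ^ s * y ^ (m - s) := by
  have hy : 0 ≤ y := hz.trans hzy
  rcases lt_or_ge (m - D) s with hs | hs
  · simp only [Nat.choose_eq_zero_of_lt hs, Nat.cast_zero, zero_mul]
    positivity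
  · have hsplit : m - s = (m - D - s) + D := by omega
    rw [hsplit, pow_add, ← mul_assoc]
    gcongr
    exact Nat.sub_le m D

theorem stmt_14_general (p : ℝ) (hp0 : 0 < p) (hp1 : p < 1) (j ℓ : ℕ)
    (g : ℕ) (D : ℕ) (hD : D + g ≤ ℓ / 2) :
    ∑ r ∈ Finset.range g, ∑ s ∈ Finset.range g,
      ((j / 2).choose r : ℝ) * p ^ (2 * r) * (1 - p ^ 2) ^ (j / 2 - r) *
        (((ℓ / 2 - D).choose s : ℝ) * p ^ (2 * s) * (1 - p ^ 2) ^ (ℓ / 2 - D - s) *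
          (1 - p) ^ D) ≤
    (∑ r ∈ Finset.range g,
        ((j / 2).choose r : ℝ) * p ^ (2 * r) * (1 - p ^ 2) ^ (j / 2 - r)) *
      (∑ s ∈ Finset.range g,
        ((ℓ / 2).choose s : ℝ) * p ^ (2 * s) * (1 - p ^ 2) ^ (ℓ / 2 - s)) := by
  have hq : 0 ≤ 1 - p ^ 2 := by nlinarith
  have hqp : 1 - p ≤ 1 - p ^ 2 := by nlinarith
  rw [Finset.sum_mul_sum]
  refine Finset.sum_le_sum fun r _ ↦ Finset.sum_le_sum fun s _ ↦
    mul_le_mul_of_nonneg_left ?_ (mul_nonneg (by positivity) (pow_nonneg hq _))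
  simp only [pow_mul]
  exact choose_tsub_mul_pow_mul_pow_le (by positivity) (by linarith) hqp (by omega) s

/-- Inequality (10): the disjoint-representation double sum is at most the
product of the individual binomial tail sums. -/
theorem stmt_14 (p : ℝ) (hp0 : 0 < p) (hp1 : p < 1) (j ℓ : ℕ) (hj : 1 ≤ j)
    (hjl : j ≤ ℓ) (g : ℕ) (hg : 1 ≤ g) (D : ℕ) (hD : D + g ≤ ℓ / 2) :
    ∑ r ∈ Finset.range g, ∑ s ∈ Finset.range g,
      ((j / 2).choose r : ℝ) * p ^ (2 * r) * (1 - p ^ 2) ^ (j / 2 - r) *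
        (((ℓ / 2 - D).choose s : ℝ) * p ^ (2 * s) * (1 - p ^ 2) ^ (ℓ / 2 - D - s) *
          (1 - p) ^ D) ≤
    (∑ r ∈ Finset.range g,
        ((j / 2).choose r : ℝ) * p ^ (2 * r) * (1 - p ^ 2) ^ (j / 2 - r)) *
      (∑ s ∈ Finset.range g,
        ((ℓ / 2).choose s : ℝ) * p ^ (2 * s) * (1 - p ^ 2) ^ (ℓ / 2 - s)) :=
  stmt_14_general p hp0 hp1 j ℓ g D hD
end

section
/- Let m be a positive integer, g ≥ 1 a fixed integer with g - 1 ≤ m, and p = p_n → 0 with m = m_n → ∞ and m p² → ∞. Then ∑_{s=0}^{g-1} C(m, s) p^{2s} (1-p²)^{m-s} ~ C(m, g-1) p^{2(g-1)} (1-p²)^{m-g+1} as n → ∞, i.e., the left tail of a Bin(m, p²) distribution up to g-1 is asymptotic to its largest (last) term. -/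
/-!
Consecutive binomial weights satisfy
`b(s) / b(s+1) = (s+1)(1-q) / ((m-s) q) ≤ (s+1) / (m q - s)`, which tends to `0` for each fixed `s`
as `m q → ∞`. Chaining finitely many such ratios, every term of the tail below `k` is `o(b(k))`, so
the tail divided by `b(k)` tends to `1`.
-/

open Filter Finset Topology

noncomputable def binomialWeight (m : ℕ) (q : ℝ) (s : ℕ) : ℝ :=
  m.choose s * q ^ s * (1 - q) ^ (m - s)

lemma binomialWeight_pos {m s : ℕ} {q : ℝ} (hs : s ≤ m) (hq : 0 < q ∧ q < 1) :
    0 < binomialWeight m q s := by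
  obtain ⟨hq0, hq1⟩ := hq
  have hchoose : (0 : ℝ) < m.choose s := by exact_mod_cast Nat.choose_pos hs
  have h1q : 0 < 1 - q := by linarith
  unfold binomialWeight
  positivity

lemma binomialWeight_div_succ {m s : ℕ} {q : ℝ} (hs : s + 1 ≤ m) (hq : 0 < q ∧ q < 1) :
    binomialWeight m q s / binomialWeight m q (s + 1) = (s + 1) * (1 - q) / ((m - s) * q) := by
  have hchoose : (m.choose (s + 1) : ℝ) * (s + 1) = m.choose s * (m - s) := by
    have h := congrArg (Nat.cast : ℕ → ℝ) (Nat.choose_succ_right_eq m s)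
    push_cast [Nat.cast_sub (Nat.le_of_succ_le hs)] at h
    linarith
  have hms : (0 : ℝ) < m - s := by
    have : (s : ℝ) + 1 ≤ m := by exact_mod_cast hs
    linarith
  have h1q : 0 < 1 - q := by linarith [hq.2]
  have hq0 := hq.1
  rw [div_eq_div_iff (binomialWeight_pos hs hq).ne' (by positivity)]
  unfold binomialWeight
  rw [show m - s = m - (s + 1) + 1 by omega]
  linear_combination (-(q ^ s * (1 - q) ^ (m - (s + 1)) * q * (1 - q))) * hchoose

section Asymptotics

variable {ι : Type*} {l : Filter ι} {m : ι → ℕ} {q : ι → ℝ}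

lemma tendsto_binomialWeight_div_succ (s : ℕ) (hsm : ∀ i, s + 1 ≤ m i)
    (hq : ∀ i, 0 < q i ∧ q i < 1) (hmq : Tendsto (fun i => (m i : ℝ) * q i) l atTop) :
    Tendsto (fun i => binomialWeight (m i) (q i) s / binomialWeight (m i) (q i) (s + 1))
      l (𝓝 0) := by
  have hden : Tendsto (fun i => (m i : ℝ) * q i - s) l atTop :=
    tendsto_atTop_add_const_right l _ hmq
  have hbound : Tendsto (fun i => ((s : ℝ) + 1) / ((m i : ℝ) * q i - s)) l (𝓝 0) :=
    tendsto_const_nhds.div_atTop hden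
  have hnonneg : ∀ i, 0 ≤ binomialWeight (m i) (q i) s / binomialWeight (m i) (q i) (s + 1) :=
    fun i => div_nonneg (binomialWeight_pos (by grind) (hq i)).le
      (binomialWeight_pos (hsm i) (hq i)).le
  refine squeeze_zero' (Eventually.of_forall hnonneg) ?_ hbound
  filter_upwards [hden.eventually_gt_atTop 0] with i hi
  obtain ⟨hq0, hq1⟩ := hq i
  have hmqs : (m i : ℝ) * q i - s ≤ (m i - s) * q i := by nlinarith
  rw [binomialWeight_div_succ (hsm i) (hq i)]
  exact div_le_div₀ (by positivity) (by nlinarith) hi hmqs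

lemma tendsto_binomialWeight_div_of_lt {s k : ℕ} (hsk : s < k) (hkm : ∀ i, k ≤ m i)
    (hq : ∀ i, 0 < q i ∧ q i < 1) (hmq : Tendsto (fun i => (m i : ℝ) * q i) l atTop) :
    Tendsto (fun i => binomialWeight (m i) (q i) s / binomialWeight (m i) (q i) k) l (𝓝 0) := by
  induction k, hsk using Nat.le_induction with
  | base => exact tendsto_binomialWeight_div_succ s hkm hq hmq
  | succ k hsk ih =>
    have hsplit : ∀ i, binomialWeight (m i) (q i) s / binomialWeight (m i) (q i) (k + 1) =
        binomialWeight (m i) (q i) s / binomialWeight (m i) (q i) k *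
          (binomialWeight (m i) (q i) k / binomialWeight (m i) (q i) (k + 1)) := fun i =>
      (div_mul_div_cancel₀ (binomialWeight_pos (by grind) (hq i)).ne').symm
    simpa only [hsplit, mul_zero] using
      (ih fun i => by grind).mul (tendsto_binomialWeight_div_succ k hkm hq hmq)

lemma tendsto_sum_range_binomialWeight_div (k : ℕ) (hkm : ∀ i, k ≤ m i)
    (hq : ∀ i, 0 < q i ∧ q i < 1) (hmq : Tendsto (fun i => (m i : ℝ) * q i) l atTop) :
    Tendsto (fun i => (∑ s ∈ range (k + 1), binomialWeight (m i) (q i) s) /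
      binomialWeight (m i) (q i) k) l (𝓝 1) := by
  have hlower : Tendsto (fun i => ∑ s ∈ range k,
      binomialWeight (m i) (q i) s / binomialWeight (m i) (q i) k) l (𝓝 0) := by
    simpa using tendsto_finsetSum (range k) fun s hs =>
      tendsto_binomialWeight_div_of_lt (mem_range.mp hs) hkm hq hmq
  have hsplit : ∀ i, (∑ s ∈ range (k + 1), binomialWeight (m i) (q i) s) /
      binomialWeight (m i) (q i) k = (∑ s ∈ range k,
        binomialWeight (m i) (q i) s / binomialWeight (m i) (q i) k) + 1 := fun i => by
    rw [sum_div, sum_range_succ, div_self (binomialWeight_pos (hkm i) (hq i)).ne']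
  simpa only [hsplit, zero_add] using hlower.add_const 1

end Asymptotics

theorem stmt_16_general (g : ℕ) (hg : 1 ≤ g) (m : ℕ → ℕ) (p : ℕ → ℝ)
    (hgm : ∀ n, g - 1 ≤ m n) (hp : ∀ n, 0 < p n ∧ p n < 1)
    (hmp2 : Filter.Tendsto (fun n : ℕ => (m n : ℝ) * p n ^ 2) Filter.atTop Filter.atTop) :
    Filter.Tendsto
      (fun n : ℕ =>
        (∑ s ∈ Finset.range g,
          ((m n).choose s : ℝ) * p n ^ (2 * s) * (1 - p n ^ 2) ^ (m n - s)) /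
        (((m n).choose (g - 1) : ℝ) * p n ^ (2 * (g - 1)) *
          (1 - p n ^ 2) ^ (m n - (g - 1))))
      Filter.atTop (nhds 1) := by
  obtain ⟨k, rfl⟩ := Nat.exists_eq_add_of_le' hg
  have hp2 : ∀ n, 0 < p n ^ 2 ∧ p n ^ 2 < 1 := fun n =>
    ⟨pow_pos (hp n).1 2, pow_lt_one₀ (hp n).1.le (hp n).2 two_ne_zero⟩
  simpa only [binomialWeight, pow_mul, Nat.add_sub_cancel] using
    tendsto_sum_range_binomialWeight_div k hgm hp2 hmp2

/-- The left tail of Bin(m, p²) up to g-1 is asymptotic to its last term when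
m → ∞, p → 0, and m p² → ∞. -/
theorem stmt_16 (g : ℕ) (hg : 1 ≤ g) (m : ℕ → ℕ) (p : ℕ → ℝ)
    (hgm : ∀ n, g - 1 ≤ m n) (hp : ∀ n, 0 < p n ∧ p n < 1)
    (hp0 : Filter.Tendsto p Filter.atTop (nhds 0))
    (hm : Filter.Tendsto m Filter.atTop Filter.atTop)
    (hmp2 : Filter.Tendsto (fun n : ℕ => (m n : ℝ) * p n ^ 2) Filter.atTop Filter.atTop) :
    Filter.Tendsto
      (fun n : ℕ =>
        (∑ s ∈ Finset.range g,
          ((m n).choose s : ℝ) * p n ^ (2 * s) * (1 - p n ^ 2) ^ (m n - s)) /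
        (((m n).choose (g - 1) : ℝ) * p n ^ (2 * (g - 1)) *
          (1 - p n ^ 2) ^ (m n - (g - 1))))
      Filter.atTop (nhds 1) :=
  stmt_16_general g hg m p hgm hp hmp2
end
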